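/- arXiv:1810.03023 — 2 statements merged into one kernel-verified Lean document; each statement's English description precedes it below -/
import Mathlib

section
/- Let n, k be positive natural numbers and w₀ ∈ ℝ. Let W : ℝ → Matrix (Fin n) (Fin k) ℝ be such that each entry w ↦ (W w) i j has derivative E i j at w₀, let v : ℝ → (Fin k → ℝ) be such that each component w ↦ v w j has derivative v' j at w₀, and let b : Fin n → ℝ. Define the tanh gate g : ℝ → (Fin n → ℝ) by g w i = tanh(((W w).mulVec (v w)) i + b i). Then for every i, the function w ↦ g w i has derivative (1 − (g w₀ i)²) · ( ((W w₀).mulVec v') i + (E.mulVec (v w₀)) i ) at w₀. -/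
open Matrix

theorem Real.hasDerivAt_tanh (x : ℝ) : HasDerivAt Real.tanh (1 - Real.tanh x ^ 2) x := by
  have hcosh : Real.cosh x ≠ 0 := (Real.cosh_pos x).ne'
  have hquot := (Real.hasDerivAt_sinh x).div (Real.hasDerivAt_cosh x) hcosh
  rw [show Real.sinh / Real.cosh = Real.tanh from
    funext fun y => (Real.tanh_eq_sinh_div_cosh y).symm] at hquot
  refine hquot.congr_deriv ?_
  rw [Real.tanh_eq_sinh_div_cosh, div_pow]
  field_simp

theorem HasDerivAt.tanh {f : ℝ → ℝ} {f' x : ℝ} (hf : HasDerivAt f f' x) :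
    HasDerivAt (fun y => Real.tanh (f y)) ((1 - Real.tanh (f x) ^ 2) * f') x :=
  (Real.hasDerivAt_tanh (f x)).comp x hf

section MatrixCalculus

variable {𝕜 m n : Type*} [NontriviallyNormedField 𝕜] [Fintype n] {x : 𝕜}

theorem HasDerivAt.dotProduct {u v : 𝕜 → n → 𝕜} {u' v' : n → 𝕜}
    (hu : ∀ j, HasDerivAt (fun y => u y j) (u' j) x)
    (hv : ∀ j, HasDerivAt (fun y => v y j) (v' j) x) :
    HasDerivAt (fun y => u y ⬝ᵥ v y) (u' ⬝ᵥ v x + u x ⬝ᵥ v') x := by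
  have hsum : HasDerivAt (fun y => ∑ j, u y j * v y j) (∑ j, (u' j * v x j + u x j * v' j)) x :=
    HasDerivAt.fun_sum fun j _ => (hu j).mul (hv j)
  simpa only [_root_.dotProduct, Finset.sum_add_distrib] using hsum

theorem HasDerivAt.mulVec_apply {M : 𝕜 → Matrix m n 𝕜} {M' : Matrix m n 𝕜}
    {v : 𝕜 → n → 𝕜} {v' : n → 𝕜}
    (hM : ∀ i j, HasDerivAt (fun y => M y i j) (M' i j) x)
    (hv : ∀ j, HasDerivAt (fun y => v y j) (v' j) x) (i : m) :
    HasDerivAt (fun y => (M y *ᵥ v y) i) ((M' *ᵥ v x) i + (M x *ᵥ v') i) x :=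
  HasDerivAt.dotProduct (hM i) hv

end MatrixCalculus

theorem lstm_tanh_gate_hasDerivAt_general
    (n k : ℕ) (w₀ : ℝ)
    (W : ℝ → Matrix (Fin n) (Fin k) ℝ) (E : Matrix (Fin n) (Fin k) ℝ)
    (hW : ∀ i j, HasDerivAt (fun w => W w i j) (E i j) w₀)
    (v : ℝ → Fin k → ℝ) (v' : Fin k → ℝ)
    (hv : ∀ j, HasDerivAt (fun w => v w j) (v' j) w₀)
    (b : Fin n → ℝ)
    (g : ℝ → Fin n → ℝ)
    (hg : ∀ w i, g w i = Real.tanh (((W w).mulVec (v w)) i + b i)) :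
    ∀ i, HasDerivAt (fun w => g w i)
      ((1 - (g w₀ i) ^ 2) * (((W w₀).mulVec v') i + (E.mulVec (v w₀)) i)) w₀ := by
  intro i
  have hgate := ((HasDerivAt.mulVec_apply hW hv i).add_const (b i)).tanh
  simp only [← hg] at hgate
  rwa [add_comm ((W w₀ *ᵥ v') i)]

/-- Tanh-gate case of Lemma 1: derivative of an LSTM tanh gate
`g w i = tanh((W w · v w) i + b i)` with respect to the scalar parameter `w`. -/
theorem lstm_tanh_gate_hasDerivAt
    (n k : ℕ) (hn : 0 < n) (hk : 0 < k) (w₀ : ℝ)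
    (W : ℝ → Matrix (Fin n) (Fin k) ℝ) (E : Matrix (Fin n) (Fin k) ℝ)
    (hW : ∀ i j, HasDerivAt (fun w => W w i j) (E i j) w₀)
    (v : ℝ → Fin k → ℝ) (v' : Fin k → ℝ)
    (hv : ∀ j, HasDerivAt (fun w => v w j) (v' j) w₀)
    (b : Fin n → ℝ)
    (g : ℝ → Fin n → ℝ)
    (hg : ∀ w i, g w i = Real.tanh (((W w).mulVec (v w)) i + b i)) :
    ∀ i, HasDerivAt (fun w => g w i)
      ((1 - (g w₀ i) ^ 2) * (((W w₀).mulVec v') i + (E.mulVec (v w₀)) i)) w₀ :=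
  lstm_tanh_gate_hasDerivAt_general n k w₀ W E hW v v' hv b g hg
end

section
/- Let (Ω, 𝒜, ℙ) be a probability space, let N, m be positive natural numbers, let p ∈ [0,1], and let ξ_1, …, ξ_N : Ω → ℝ be mutually independent random variables each taking value 1 with probability p and value 0 with probability 1 − p. Let A_1, …, A_N and B_1, …, B_N be fixed matrices in Matrix (Fin m) (Fin m) ℝ and let z ∈ Fin m → ℝ be a fixed vector. Then the entrywise expectation of the random vector ((A_N + ξ_N(ω) • B_N) ⬝ (A_{N−1} + ξ_{N−1}(ω) • B_{N−1}) ⬝ ⋯ ⬝ (A_1 + ξ_1(ω) • B_1)).mulVec z equals ((A_N + p • B_N) ⬝ (A_{N−1} + p • B_{N−1}) ⬝ ⋯ ⬝ (A_1 + p • B_1)).mulVec z; that is, for every index i, 𝔼[ (((A_N + ξ_N • B_N) ⬝ ⋯ ⬝ (A_1 + ξ_1 • B_1)).mulVec z) i ] = (((A_N + p • B_N) ⬝ ⋯ ⬝ (A_1 + p • B_1)).mulVec z) i. -/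
/-!
Each factor `A_j + ξ_j • B_j` is affine in `ξ_j`, and `ξ_j` is independent of the product of the
factors to its right, since that product is measurable with respect to the σ-algebra generated by
the other `ξ_t`. Hence, entrywise, `𝔼[(A + ξ • B) X] = (A + 𝔼[ξ] • B) 𝔼[X]`, and peeling off the
factors one at a time replaces every `ξ_j` by its mean, which is `p` for a Bernoulli(p) variable.
-/

open MeasureTheory ProbabilityTheory Matrix

lemma measurable_list_prod_apply {α ι n R : Type*} {mα : MeasurableSpace α} [Fintype n]
    [DecidableEq n] [Semiring R] [MeasurableSpace R] [MeasurableAdd₂ R] [MeasurableMul₂ R]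
    (M : ι → α → Matrix n n R) {L : List ι}
    (hM : ∀ j ∈ L, ∀ i k, Measurable fun a => M j a i k) (i k : n) :
    Measurable fun a => (L.map (M · a)).prod i k := by
  induction L generalizing i k with
  | nil => simp [one_apply]
  | cons j T ih =>
    simp only [List.map_cons, List.prod_cons, mul_apply]
    exact Finset.measurable_sum _ fun l _ =>
      (hM j List.mem_cons_self i l).mul (ih (fun t ht => hM t (List.mem_cons_of_mem _ ht)) l k)

lemma ProbabilityTheory.iIndepFun.indepFun_of_measurable_iSup {Ω ι β γ : Type*}
    {mΩ : MeasurableSpace Ω} {mβ : MeasurableSpace β} [MeasurableSpace γ] {P : Measure Ω}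
    {ξ : ι → Ω → β} (h : iIndepFun ξ P) (hξ : ∀ t, Measurable (ξ t)) {j : ι} {S : Set ι}
    (hj : j ∉ S) {Y : Ω → γ} (hY : Measurable[⨆ t ∈ S, mβ.comap (ξ t)] Y) :
    IndepFun (ξ j) Y P := by
  have hST := indep_iSup_of_disjoint (fun t => (hξ t).comap_le) h.iIndep
    (Set.disjoint_singleton_left.2 hj)
  rw [IndepFun_iff_Indep]
  refine indep_of_indep_of_le_right (indep_of_indep_of_le_left hST ?_) hY.comap_le
  exact le_iSup₂_of_le j (Set.mem_singleton j) le_rfl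

section Bernoulli

variable {Ω : Type*} [MeasurableSpace Ω] {P : Measure Ω} [IsProbabilityMeasure P] {X : Ω → ℝ}
  (hX : Measurable X) {p : ℝ} (hp : p ∈ Set.Icc 0 1) (h1 : P {ω | X ω = 1} = ENNReal.ofReal p)
  (h0 : P {ω | X ω = 0} = ENNReal.ofReal (1 - p))
include hX hp h1 h0

lemma ae_eq_indicator_of_bernoulli : X =ᵐ[P] {ω | X ω = 1}.indicator 1 := by
  have hdisj : Disjoint {ω | X ω = 1} {ω | X ω = 0} :=
    Set.disjoint_left.2 fun ω h1 h0 => one_ne_zero (h1.symm.trans h0)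
  have hfull : P ({ω | X ω = 1} ∪ {ω | X ω = 0}) = 1 := by
    rw [measure_union hdisj (hX (measurableSet_singleton 0)), h1, h0,
      ← ENNReal.ofReal_add hp.1 (sub_nonneg.2 hp.2), add_sub_cancel, ENNReal.ofReal_one]
  filter_upwards [(prob_compl_eq_zero_iff ((hX (measurableSet_singleton 1)).union
    (hX (measurableSet_singleton 0)))).2 hfull |> measure_eq_zero_iff_ae_notMem.1] with ω hω
  rcases not_not.1 hω with (hω : X ω = 1) | (hω : X ω = 0) <;> simp [Set.indicator, hω]

lemma integrable_of_bernoulli : Integrable X P :=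
  ((integrable_const 1).indicator (hX (measurableSet_singleton 1))).congr
    (ae_eq_indicator_of_bernoulli hX hp h1 h0).symm

lemma integral_of_bernoulli : ∫ ω, X ω ∂P = p := by
  rw [integral_congr_ae (ae_eq_indicator_of_bernoulli hX hp h1 h0),
    integral_indicator_one (s := {ω | X ω = 1}) (hX (measurableSet_singleton 1)),
    measureReal_def, h1, ENNReal.toReal_ofReal hp.1]

end Bernoulli

section EntrywiseIntegral

variable {Ω m n : Type*} [MeasurableSpace Ω] {P : Measure Ω}

noncomputable def entrywiseIntegral (X : Ω → Matrix m n ℝ) (P : Measure Ω) : Matrix m n ℝ :=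
  of fun i k => ∫ ω, X ω i k ∂P

lemma integral_mulVec_apply [Fintype n] {X : Ω → Matrix m n ℝ}
    (hX : ∀ i k, Integrable (fun ω => X ω i k) P) (z : n → ℝ) (i : m) :
    ∫ ω, (X ω *ᵥ z) i ∂P = (entrywiseIntegral X P *ᵥ z) i := by
  simp only [mulVec, dotProduct, entrywiseIntegral, of_apply]
  rw [integral_finsetSum _ fun k _ => (hX i k).mul_const (z k)]
  simp only [integral_mul_const]

lemma ProbabilityTheory.IndepFun.affine_left {ξ Y : Ω → ℝ} (h : IndepFun ξ Y P) (a b : ℝ) :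
    IndepFun (fun ω => a + ξ ω * b) Y P :=
  h.comp (φ := fun x => a + x * b) (by fun_prop) measurable_id

variable [IsProbabilityMeasure P] [Fintype n] {ξ : Ω → ℝ} {X : Ω → Matrix n n ℝ}
  (hξ : Integrable ξ P) (hX : ∀ i k, Integrable (fun ω => X ω i k) P)
  (hind : ∀ i k, IndepFun ξ (fun ω => X ω i k) P) (A B : Matrix n n ℝ)
include hξ hX hind

lemma integrable_affine_mul_apply (i k : n) :
    Integrable (fun ω => ((A + ξ ω • B) * X ω) i k) P := by
  simp only [mul_apply, Matrix.add_apply, Matrix.smul_apply, smul_eq_mul]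
  exact integrable_finsetSum _ fun l _ => ((hind l k).affine_left _ _).integrable_mul
    ((integrable_const _).add (hξ.mul_const _)) (hX l k)

lemma entrywiseIntegral_affine_mul :
    entrywiseIntegral (fun ω => (A + ξ ω • B) * X ω) P
      = (A + (∫ ω, ξ ω ∂P) • B) * entrywiseIntegral X P := by
  ext i k
  have hcoef (l : n) : Integrable (fun ω => A i l + ξ ω * B i l) P :=
    (integrable_const _).add (hξ.mul_const _)
  have hterm (l : n) : Integrable (fun ω => (A i l + ξ ω * B i l) * X ω l k) P :=
    ((hind l k).affine_left _ _).integrable_mul (hcoef l) (hX l k)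
  simp only [entrywiseIntegral, of_apply, mul_apply, Matrix.add_apply, Matrix.smul_apply,
    smul_eq_mul]
  rw [integral_finsetSum _ fun l _ => hterm l]
  refine Finset.sum_congr rfl fun l _ => ?_
  rw [((hind l k).affine_left _ _).integral_fun_mul_eq_mul_integral (hcoef l).1 (hX l k).1,
    integral_add (integrable_const _) (hξ.mul_const _), integral_const, integral_mul_const]
  simp

end EntrywiseIntegral

section AffineProduct

variable {Ω ι n : Type*} [MeasurableSpace Ω] {P : Measure Ω} [Fintype n]
  [DecidableEq n] {ξ : ι → Ω → ℝ} (hξ : ∀ j, Measurable (ξ j)) (hindep : iIndepFun ξ P)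
  (A B : ι → Matrix n n ℝ)
include hξ hindep

lemma indepFun_list_prod_affine_apply {j : ι} {L : List ι} (hj : j ∉ L) (l k : n) :
    IndepFun (ξ j) (fun ω => (L.map fun t => A t + ξ t ω • B t).prod l k) P := by
  refine hindep.indepFun_of_measurable_iSup hξ (S := {t | t ∈ L}) hj ?_
  refine measurable_list_prod_apply (fun t ω => A t + ξ t ω • B t) (fun t ht i k => ?_) l k
  have hξt : Measurable[⨆ t ∈ {t | t ∈ L}, MeasurableSpace.comap (ξ t) inferInstance] (ξ t) :=
    measurable_iff_comap_le.2 (le_iSup₂_of_le t ht le_rfl)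
  simp only [Matrix.add_apply, Matrix.smul_apply, smul_eq_mul]
  exact measurable_const.add (hξt.mul_const _)

variable [IsProbabilityMeasure P] (hint : ∀ j, Integrable (ξ j) P)
include hint

lemma integrable_list_prod_affine_apply {L : List ι} (hL : L.Nodup) (i k : n) :
    Integrable (fun ω => (L.map fun t => A t + ξ t ω • B t).prod i k) P := by
  induction L generalizing i k with
  | nil => simp only [List.map_nil, List.prod_nil]; exact integrable_const _
  | cons j T ih =>
    obtain ⟨hjT, hT⟩ := List.nodup_cons.1 hL
    simp only [List.map_cons, List.prod_cons]
    exact integrable_affine_mul_apply (hint j) (ih hT)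
      (indepFun_list_prod_affine_apply hξ hindep A B hjT) _ _ i k

lemma entrywiseIntegral_list_prod_affine {L : List ι} (hL : L.Nodup) :
    entrywiseIntegral (fun ω => (L.map fun t => A t + ξ t ω • B t).prod) P
      = (L.map fun t => A t + (∫ ω, ξ t ω ∂P) • B t).prod := by
  induction L with
  | nil => ext i k; simp [entrywiseIntegral]
  | cons j T ih =>
    obtain ⟨hjT, hT⟩ := List.nodup_cons.1 hL
    simp only [List.map_cons, List.prod_cons]
    rw [entrywiseIntegral_affine_mul (hint j)
      (integrable_list_prod_affine_apply hξ hindep A B hint hT)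
      (indepFun_list_prod_affine_apply hξ hindep A B hjT), ih hT]

end AffineProduct

theorem hdetach_expected_gradient_general
    {Ω : Type*} [MeasurableSpace Ω] (P : Measure Ω) [IsProbabilityMeasure P]
    (N m : ℕ)
    (p : ℝ) (hp : p ∈ Set.Icc (0 : ℝ) 1)
    (ξ : Fin N → Ω → ℝ)
    (hmeas : ∀ j, Measurable (ξ j))
    (hindep : iIndepFun ξ P)
    (hone : ∀ j, P {ω | ξ j ω = 1} = ENNReal.ofReal p)
    (hzero : ∀ j, P {ω | ξ j ω = 0} = ENNReal.ofReal (1 - p))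
    (A B : Fin N → Matrix (Fin m) (Fin m) ℝ) (z : Fin m → ℝ) :
    ∀ i, (∫ ω, (((List.ofFn
            (fun j : Fin N => A j.rev + ξ j.rev ω • B j.rev)).prod).mulVec z) i ∂P)
        = (((List.ofFn
            (fun j : Fin N => A j.rev + p • B j.rev)).prod).mulVec z) i := by
  have hint j := integrable_of_bernoulli (hmeas j) hp (hone j) (hzero j)
  have hmean j := integral_of_bernoulli (hmeas j) hp (hone j) (hzero j)
  have hrev : (List.ofFn Fin.rev : List (Fin N)).Nodup := List.nodup_ofFn.2 Fin.rev_injective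
  have hint_prod := integrable_list_prod_affine_apply hmeas hindep A B hint hrev
  have hexp := entrywiseIntegral_list_prod_affine hmeas hindep A B hint hrev
  simp only [List.map_ofFn, Function.comp_def, hmean] at hint_prod hexp
  intro i
  rw [integral_mulVec_apply hint_prod z i, hexp]

/-- Corollary 1 of the paper: in expectation over i.i.d. Bernoulli(p)
detaching variables `ξ_1, …, ξ_N`, the h-detach gradient
`(A_N + ξ_N B_N) ⬝ ⋯ ⬝ (A_1 + ξ_1 B_1) z` equals
`(A_N + p B_N) ⬝ ⋯ ⬝ (A_1 + p B_1) z`.  (Index `j : Fin N` corresponds to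
subscript `j + 1`; `Fin.rev` arranges the factors from subscript `N` on the
left down to subscript `1` on the right.) -/
theorem hdetach_expected_gradient
    {Ω : Type*} [MeasurableSpace Ω] (P : Measure Ω) [IsProbabilityMeasure P]
    (N m : ℕ) (hN : 0 < N) (hm : 0 < m)
    (p : ℝ) (hp : p ∈ Set.Icc (0 : ℝ) 1)
    (ξ : Fin N → Ω → ℝ)
    (hmeas : ∀ j, Measurable (ξ j))
    (hindep : iIndepFun ξ P)
    (hone : ∀ j, P {ω | ξ j ω = 1} = ENNReal.ofReal p)
    (hzero : ∀ j, P {ω | ξ j ω = 0} = ENNReal.ofReal (1 - p))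
    (A B : Fin N → Matrix (Fin m) (Fin m) ℝ) (z : Fin m → ℝ) :
    ∀ i, (∫ ω, (((List.ofFn
            (fun j : Fin N => A j.rev + ξ j.rev ω • B j.rev)).prod).mulVec z) i ∂P)
        = (((List.ofFn
            (fun j : Fin N => A j.rev + p • B j.rev)).prod).mulVec z) i :=
  hdetach_expected_gradient_general P N m p hp ξ hmeas hindep hone hzero A B z
end
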